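/- Fix ᾱ ∈ (0,1), σ_y > 0 and y ∈ ℝⁿ. Define the VP noise-perturbed posterior density p^{VP}(x | y) = ∫ N(x; √ᾱ x₀, (1−ᾱ)I) dμ₀^y(x₀), where μ₀^y has density dμ₀^y/dμ₀(x₀) = N(y; x₀, σ_y²I)/Z with Z = ∫ N(y; x₀, σ_y²I) dμ₀(x₀) > 0. Define σ̃² = (σ_y^{−2} + ᾱ/(1−ᾱ))^{−1}, x̃(x) = σ̃²(σ_y^{−2} y + (√ᾱ/(1−ᾱ)) x), and q(z) = ∫ N(z; x₀, σ̃²I) dμ₀(x₀). Then for every x ∈ ℝⁿ, p^{VP}(· | y) is positive and differentiable at x, and ∇_x log p^{VP}(x | y) = (√ᾱ σ̃²/(1−ᾱ)) · (∇ log q)(x̃(x)) − ᾱ^{−1}(σ_y² + (1−ᾱ)/ᾱ)^{−1}(x − √ᾱ y). (Appendix B.1: the Variance-Preserving version of the exact denoising posterior score, obtained by the VE-to-VP conversion.) -/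

import Mathlib

/-!
Completing the square in `x₀` turns the product of the forward kernel `N(x; √ᾱ x₀, (1−ᾱ)I)` and
the likelihood `N(y; x₀, σ_y²I)` into `N(x; √ᾱ y, (1−ᾱ+ᾱσ_y²)I) · N(x₀; x̃(x), σ̃²I)`, so
`p^{VP}(x | y) = Z⁻¹ N(x; √ᾱ y, (1−ᾱ+ᾱσ_y²)I) q(x̃(x))`. The score is then the Gaussian score
`−(x − √ᾱ y)/(1−ᾱ+ᾱσ_y²)` plus the chain-rule term of `log q ∘ x̃`, where `x̃` is affine with
slope `√ᾱ σ̃²/(1−ᾱ)`. The mixture `q` is positive and differentiable because the Gaussian and its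
gradient are bounded uniformly in the mean, which licenses differentiation under the integral.
-/

open MeasureTheory Real

/-- Isotropic Gaussian density on ℝⁿ with mean `m` and covariance `v • I`
(`v` is the variance, i.e. `v = σ²`): `N(x; m, σ²I) = (2πσ²)^{-n/2} exp(-‖x-m‖²/(2σ²))`. -/
noncomputable def gaussDensity (n : ℕ) (v : ℝ) (m x : EuclideanSpace ℝ (Fin n)) : ℝ :=
  (2 * π * v) ^ (-(n : ℝ) / 2) * Real.exp (-‖x - m‖ ^ 2 / (2 * v))

open InnerProductSpace

section GradientCalculus

variable {F : Type*} [NormedAddCommGroup F] [InnerProductSpace ℝ F] [CompleteSpace F]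
  {f g : F → ℝ} {f' g' x : F}

theorem HasGradientAt.add (hf : HasGradientAt f f' x) (hg : HasGradientAt g g' x) :
    HasGradientAt (fun z => f z + g z) (f' + g') x := by
  rw [hasGradientAt_iff_hasFDerivAt, map_add]
  exact hf.hasFDerivAt.add hg.hasFDerivAt

theorem HasGradientAt.const_add (c : ℝ) (hf : HasGradientAt f f' x) :
    HasGradientAt (fun z => c + f z) f' x :=
  hf.hasFDerivAt.const_add c

theorem HasGradientAt.log (hf : HasGradientAt f f' x) (hx : f x ≠ 0) :
    HasGradientAt (fun z => Real.log (f z)) ((f x)⁻¹ • f') x := by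
  rw [hasGradientAt_iff_hasFDerivAt, map_smulₛₗ]
  exact hf.hasFDerivAt.log hx

theorem HasGradientAt.comp_smul_add (c : ℝ) (b : F) (hf : HasGradientAt f f' (c • x + b)) :
    HasGradientAt (fun z => f (c • z + b)) (c • f') x := by
  rw [hasGradientAt_iff_hasFDerivAt]
  refine (hf.hasFDerivAt.comp x (((hasFDerivAt_id x).const_smul c).add_const b)).congr_fderiv ?_
  ext w
  simp only [ContinuousLinearMap.comp_smulₛₗ, ringHom_apply, ContinuousLinearMap.comp_id, smul_apply,
    toDual_apply_apply, smul_eq_mul, map_smul]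

end GradientCalculus

section Gaussian

variable {n : ℕ} {v : ℝ}

theorem gaussDensity_pos (hv : 0 < v) (m x : EuclideanSpace ℝ (Fin n)) :
    0 < gaussDensity n v m x := by
  unfold gaussDensity
  positivity

theorem gaussDensity_le (hv : 0 < v) (m x : EuclideanSpace ℝ (Fin n)) :
    gaussDensity n v m x ≤ (2 * π * v) ^ (-(n : ℝ) / 2) := by
  refine mul_le_of_le_one_right (by positivity) (exp_le_one_iff.2 ?_)
  exact div_nonpos_of_nonpos_of_nonneg (neg_nonpos.2 (by positivity)) (by positivity)

@[fun_prop]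
theorem continuous_gaussDensity_mean (x : EuclideanSpace ℝ (Fin n)) :
    Continuous fun m => gaussDensity n v m x := by
  unfold gaussDensity
  fun_prop

theorem hasGradientAt_gaussDensity (m x : EuclideanSpace ℝ (Fin n)) :
    HasGradientAt (gaussDensity n v m) (-(v⁻¹ * gaussDensity n v m x) • (x - m)) x := by
  rw [hasGradientAt_iff_hasFDerivAt]
  have h := (((((hasFDerivAt_id x).sub_const m).norm_sq.neg).mul_const (2 * v)⁻¹).exp).const_mul
    ((2 * π * v) ^ (-(n : ℝ) / 2))
  refine h.congr_fderiv ?_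
  ext w
  simp only [gaussDensity, smul_apply, neg_apply,
    ContinuousLinearMap.comp_id, coe_innerSL_apply, toDual_apply_apply, id_eq, smul_eq_mul,
    nsmul_eq_mul, real_inner_smul_left, Pi.neg_apply]
  rw [show -‖x - m‖ ^ 2 * (2 * v)⁻¹ = -‖x - m‖ ^ 2 / (2 * v) by ring]
  ring

@[fun_prop]
theorem differentiable_gaussDensity (m : EuclideanSpace ℝ (Fin n)) :
    Differentiable ℝ (gaussDensity n v m) := fun x =>
  (hasGradientAt_gaussDensity m x).differentiableAt

theorem hasGradientAt_log_gaussDensity (hv : 0 < v) (m x : EuclideanSpace ℝ (Fin n)) :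
    HasGradientAt (fun z => Real.log (gaussDensity n v m z)) (-v⁻¹ • (x - m)) x := by
  convert (hasGradientAt_gaussDensity m x).log (gaussDensity_pos hv m x).ne' using 1
  rw [smul_smul]
  field_simp [(gaussDensity_pos hv m x).ne']

end Gaussian

theorem mul_exp_neg_sq_div_le {v : ℝ} (hv : 0 < v) (d : ℝ) :
    d * exp (-d ^ 2 / (2 * v)) ≤ √(2 * v) := by
  have hs : 0 < √(2 * v) := sqrt_pos.2 (by positivity)
  obtain ⟨w, rfl⟩ : ∃ w, d = √(2 * v) * w := ⟨d / √(2 * v), by field_simp⟩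
  have hw : w ≤ exp (w ^ 2) := by nlinarith [add_one_le_exp (w ^ 2), sq_nonneg (w - 1)]
  have hexp : -(√(2 * v) * w) ^ 2 / (2 * v) = -w ^ 2 := by
    rw [mul_pow, sq_sqrt (by positivity)]
    field_simp
  rw [hexp, mul_assoc, exp_neg, ← div_eq_mul_inv]
  exact mul_le_of_le_one_right hs.le ((div_le_one (exp_pos _)).2 hw)

section Mixture

variable {n : ℕ} {v : ℝ} (μ : Measure (EuclideanSpace ℝ (Fin n)))

noncomputable def gaussMixture (n : ℕ) (v : ℝ) (μ : Measure (EuclideanSpace ℝ (Fin n)))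
    (x : EuclideanSpace ℝ (Fin n)) : ℝ :=
  ∫ m, gaussDensity n v m x ∂μ

theorem integrable_gaussDensity_mean [IsFiniteMeasure μ] (hv : 0 < v)
    (x : EuclideanSpace ℝ (Fin n)) :
    Integrable (fun m => gaussDensity n v m x) μ := by
  refine (integrable_const ((2 * π * v) ^ (-(n : ℝ) / 2))).mono'
    (continuous_gaussDensity_mean x).aestronglyMeasurable (ae_of_all _ fun m => ?_)
  rw [norm_of_nonneg (gaussDensity_pos hv m x).le]
  exact gaussDensity_le hv m x

theorem gaussMixture_pos [IsFiniteMeasure μ] [NeZero μ] (hv : 0 < v)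
    (x : EuclideanSpace ℝ (Fin n)) :
    0 < gaussMixture n v μ x := by
  rw [gaussMixture, integral_pos_iff_support_of_nonneg (fun m => (gaussDensity_pos hv m x).le)
    (integrable_gaussDensity_mean μ hv x)]
  have : (Function.support fun m => gaussDensity n v m x) = Set.univ :=
    Function.support_eq_univ fun m => (gaussDensity_pos hv m x).ne'
  simpa [this] using NeZero.ne μ

theorem norm_gradient_gaussDensity_le (hv : 0 < v) (m x : EuclideanSpace ℝ (Fin n)) :
    ‖-(v⁻¹ * gaussDensity n v m x) • (x - m)‖ ≤ v⁻¹ * (2 * π * v) ^ (-(n : ℝ) / 2) * √(2 * v) := by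
  rw [norm_smul, norm_neg, norm_mul, norm_inv, norm_of_nonneg hv.le,
    norm_of_nonneg (gaussDensity_pos hv m x).le, gaussDensity]
  calc v⁻¹ * ((2 * π * v) ^ (-(n : ℝ) / 2) * exp (-‖x - m‖ ^ 2 / (2 * v))) * ‖x - m‖
      = v⁻¹ * (2 * π * v) ^ (-(n : ℝ) / 2) * (‖x - m‖ * exp (-‖x - m‖ ^ 2 / (2 * v))) := by ring
    _ ≤ v⁻¹ * (2 * π * v) ^ (-(n : ℝ) / 2) * √(2 * v) := by
      gcongr
      exact mul_exp_neg_sq_div_le hv _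

theorem differentiable_gaussMixture [IsFiniteMeasure μ] (hv : 0 < v) :
    Differentiable ℝ (gaussMixture n v μ) := fun z =>
  (hasFDerivAt_integral_of_dominated_of_fderiv_le (x₀ := z) (s := Set.univ) Filter.univ_mem
    (F := fun x m => gaussDensity n v m x)
    (F' := fun x m => toDual ℝ _ (-(v⁻¹ * gaussDensity n v m x) • (x - m)))
    (Filter.Eventually.of_forall fun x => (continuous_gaussDensity_mean x).aestronglyMeasurable)
    (integrable_gaussDensity_mean μ hv z)
    ((toDual ℝ _).continuous.comp_aestronglyMeasurable (by fun_prop))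
    (ae_of_all _ fun m x _ => by
      rw [LinearIsometryEquiv.norm_map]; exact norm_gradient_gaussDensity_le hv m x)
    (integrable_const _)
    (ae_of_all _ fun m x _ => (hasGradientAt_gaussDensity m x).hasFDerivAt)).differentiableAt

end Mixture

section Posterior

variable {n : ℕ} {a s : ℝ}

theorem gaussDensity_mul_gaussDensity (ha : 0 < a) (hs : 0 < s) (r : ℝ)
    (x x₀ y : EuclideanSpace ℝ (Fin n)) :
    gaussDensity n a (r • x₀) x * gaussDensity n s x₀ y =
      gaussDensity n (a + r ^ 2 * s) (r • y) x *
        gaussDensity n (s⁻¹ + r ^ 2 / a)⁻¹ x₀ ((s⁻¹ + r ^ 2 / a)⁻¹ • (s⁻¹ • y + (r / a) • x)) := by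
  set t := (s⁻¹ + r ^ 2 / a)⁻¹ with ht
  have hts : t * (a + r ^ 2 * s) = a * s := by rw [ht]; field_simp
  unfold gaussDensity
  rw [mul_mul_mul_comm, mul_mul_mul_comm ((2 * π * (a + r ^ 2 * s)) ^ (-(n : ℝ) / 2)),
    ← mul_rpow (by positivity) (by positivity), ← mul_rpow (by positivity) (by positivity),
    ← exp_add, ← exp_add]
  congr 2
  · linear_combination (-4 * π ^ 2) * hts
  · simp only [norm_sub_sq_real, norm_add_sq_real, norm_smul, norm_eq_abs, mul_pow, sq_abs,
      inner_add_left, real_inner_smul_left, real_inner_smul_right,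
      real_inner_comm x y]
    rw [ht]
    field_simp
    ring

theorem integral_gaussDensity_withDensity (ha : 0 < a) (hs : 0 < s) (r : ℝ) {Z : ℝ}
    (hZ : 0 ≤ Z) (μ : Measure (EuclideanSpace ℝ (Fin n))) (x y : EuclideanSpace ℝ (Fin n)) :
    ∫ x₀, gaussDensity n a (r • x₀) x
        ∂μ.withDensity (fun x₀ => ENNReal.ofReal (gaussDensity n s x₀ y / Z)) =
      Z⁻¹ * (gaussDensity n (a + r ^ 2 * s) (r • y) x *
        gaussMixture n (s⁻¹ + r ^ 2 / a)⁻¹ μ ((s⁻¹ + r ^ 2 / a)⁻¹ • (s⁻¹ • y + (r / a) • x))) := by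
  rw [integral_withDensity_eq_integral_toReal_smul
    (((continuous_gaussDensity_mean y).div_const Z).measurable.ennreal_ofReal)
    (ae_of_all _ fun _ => ENNReal.ofReal_lt_top), gaussMixture, ← integral_const_mul,
    ← integral_const_mul]
  congr 1 with x₀
  rw [ENNReal.toReal_ofReal (div_nonneg (gaussDensity_pos hs x₀ y).le hZ), smul_eq_mul,
    ← gaussDensity_mul_gaussDensity ha hs]
  ring

end Posterior

theorem hasGradientAt_log_mul_gaussDensity_mul_comp {n : ℕ} {v C c : ℝ}
    {q : EuclideanSpace ℝ (Fin n) → ℝ} (hv : 0 < v) (hC : 0 < C) (hq : ∀ z, 0 < q z)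
    (m b x : EuclideanSpace ℝ (Fin n)) (hqx : DifferentiableAt ℝ q (c • x + b)) :
    HasGradientAt (fun z => Real.log (C * (gaussDensity n v m z * q (c • z + b))))
      (-v⁻¹ • (x - m) + c • gradient (fun z => Real.log (q z)) (c • x + b)) x := by
  have hsplit : (fun z => Real.log (C * (gaussDensity n v m z * q (c • z + b)))) = fun z =>
      Real.log C + (Real.log (gaussDensity n v m z) + Real.log (q (c • z + b))) := by
    funext z
    have hG := gaussDensity_pos hv m z
    rw [Real.log_mul hC.ne' (mul_pos hG (hq _)).ne', Real.log_mul hG.ne' (hq _).ne']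
  rw [hsplit]
  have hlogq := (hqx.log (hq _).ne').hasGradientAt
  exact ((hasGradientAt_log_gaussDensity hv m x).add (hlogq.comp_smul_add c b)).const_add _

theorem exact_denoising_posterior_score_VP_general
    (n : ℕ)
    (μ₀ : Measure (EuclideanSpace ℝ (Fin n))) [IsProbabilityMeasure μ₀]
    (α : ℝ) (hα : α ∈ Set.Ioo (0 : ℝ) 1)
    (σy : ℝ) (hσy : 0 < σy)
    (y : EuclideanSpace ℝ (Fin n))
    -- the normalizing constant `Z = ∫ N(y; x₀, σ_y² I) dμ₀(x₀) > 0`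
    (Z : ℝ) (hZpos : 0 < Z)
    -- the denoising posterior `μ₀^y`, with density `N(y; x₀, σ_y² I)/Z` w.r.t. `μ₀`
    (μpost : Measure (EuclideanSpace ℝ (Fin n)))
    (hpost : μpost = μ₀.withDensity
      (fun x₀ => ENNReal.ofReal (gaussDensity n (σy ^ 2) x₀ y / Z)))
    -- the VP noise-perturbed posterior density `p^{VP}(x | y) = ∫ N(x; √ᾱ x₀, (1−ᾱ)I) dμ₀^y(x₀)`
    (pVP : EuclideanSpace ℝ (Fin n) → ℝ)
    (hpVP : ∀ x, pVP x = ∫ x₀, gaussDensity n (1 - α) (Real.sqrt α • x₀) x ∂μpost)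
    -- `σ̃² = (σ_y⁻² + ᾱ/(1−ᾱ))⁻¹`
    (σtilde2 : ℝ) (hσtilde2 : σtilde2 = ((σy ^ 2)⁻¹ + α / (1 - α))⁻¹)
    -- `x̃(x) = σ̃²(σ_y⁻² y + (√ᾱ/(1−ᾱ)) x)`
    (xtilde : EuclideanSpace ℝ (Fin n) → EuclideanSpace ℝ (Fin n))
    (hxtilde : ∀ x, xtilde x =
      σtilde2 • ((σy ^ 2)⁻¹ • y + (Real.sqrt α / (1 - α)) • x))
    -- `q(z) = ∫ N(z; x₀, σ̃²I) dμ₀(x₀)`, everywhere positive and differentiable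
    (q : EuclideanSpace ℝ (Fin n) → ℝ)
    (hq : ∀ z, q z = ∫ x₀, gaussDensity n σtilde2 x₀ z ∂μ₀) :
    ∀ x, 0 < pVP x ∧ DifferentiableAt ℝ pVP x ∧
      gradient (fun z => Real.log (pVP z)) x
        = (Real.sqrt α * σtilde2 / (1 - α)) • gradient (fun z => Real.log (q z)) (xtilde x)
          - (α⁻¹ * (σy ^ 2 + (1 - α) / α)⁻¹) • (x - Real.sqrt α • y) := by
  intro x
  obtain ⟨hα0, hα1⟩ := hα
  have h1α : 0 < 1 - α := sub_pos.2 hα1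
  have hσy2 : 0 < σy ^ 2 := by positivity
  have hσt : 0 < σtilde2 := by rw [hσtilde2]; positivity
  have hs2 : 0 < 1 - α + α * σy ^ 2 := by positivity
  have hq' : q = gaussMixture n σtilde2 μ₀ := funext hq
  have hqpos : ∀ z, 0 < q z := hq' ▸ gaussMixture_pos μ₀ hσt
  have hqdiff : Differentiable ℝ q := hq' ▸ differentiable_gaussMixture μ₀ hσt
  have hxt : xtilde = fun z => (√α * σtilde2 / (1 - α)) • z + (σtilde2 * (σy ^ 2)⁻¹) • y := by
    funext z; rw [hxtilde]; module
  have hpVP' : pVP = fun z => Z⁻¹ * (gaussDensity n (1 - α + α * σy ^ 2) (√α • y) z *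
      q ((√α * σtilde2 / (1 - α)) • z + (σtilde2 * (σy ^ 2)⁻¹) • y)) := by
    funext z
    rw [hpVP, hpost, integral_gaussDensity_withDensity h1α hσy2 _ hZpos.le, sq_sqrt hα0.le,
      ← hσtilde2, ← hq', ← hxtilde, hxt]
  have hcoef : α⁻¹ * (σy ^ 2 + (1 - α) / α)⁻¹ = (1 - α + α * σy ^ 2)⁻¹ := by
    field_simp
    ring
  refine ⟨?_, ?_, ?_⟩
  · rw [hpVP']
    exact mul_pos (inv_pos.2 hZpos) (mul_pos (gaussDensity_pos hs2 _ x) (hqpos _))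
  · rw [hpVP']
    fun_prop
  · rw [hpVP', (hasGradientAt_log_mul_gaussDensity_mul_comp hs2 (inv_pos.2 hZpos) hqpos
      _ _ x (hqdiff _)).gradient, hxt, hcoef, neg_smul]
    abel

/-- Appendix B.1: the Variance-Preserving version of the exact denoising posterior score.
With `p^{VP}(x | y) = ∫ N(x; √ᾱ x₀, (1−ᾱ)I) dμ₀^y(x₀)`, `σ̃² = (σ_y⁻² + ᾱ/(1−ᾱ))⁻¹`,
`x̃(x) = σ̃²(σ_y⁻² y + (√ᾱ/(1−ᾱ)) x)` and `q(z) = ∫ N(z; x₀, σ̃²I) dμ₀(x₀)`, the density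
`p^{VP}(· | y)` is positive and differentiable at every `x` and
`∇ log p^{VP}(x | y) = (√ᾱ σ̃²/(1−ᾱ)) ∇ log q (x̃(x)) − ᾱ⁻¹(σ_y² + (1−ᾱ)/ᾱ)⁻¹(x − √ᾱ y)`. -/
theorem exact_denoising_posterior_score_VP
    (n : ℕ) (hn : 1 ≤ n)
    (μ₀ : Measure (EuclideanSpace ℝ (Fin n))) [IsProbabilityMeasure μ₀]
    (α : ℝ) (hα : α ∈ Set.Ioo (0 : ℝ) 1)
    (σy : ℝ) (hσy : 0 < σy)
    (y : EuclideanSpace ℝ (Fin n))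
    -- the normalizing constant `Z = ∫ N(y; x₀, σ_y² I) dμ₀(x₀) > 0`
    (Z : ℝ) (hZ : Z = ∫ x₀, gaussDensity n (σy ^ 2) x₀ y ∂μ₀) (hZpos : 0 < Z)
    -- the denoising posterior `μ₀^y`, with density `N(y; x₀, σ_y² I)/Z` w.r.t. `μ₀`
    (μpost : Measure (EuclideanSpace ℝ (Fin n)))
    (hpost : μpost = μ₀.withDensity
      (fun x₀ => ENNReal.ofReal (gaussDensity n (σy ^ 2) x₀ y / Z)))
    -- the VP noise-perturbed posterior density `p^{VP}(x | y) = ∫ N(x; √ᾱ x₀, (1−ᾱ)I) dμ₀^y(x₀)`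
    (pVP : EuclideanSpace ℝ (Fin n) → ℝ)
    (hpVP : ∀ x, pVP x = ∫ x₀, gaussDensity n (1 - α) (Real.sqrt α • x₀) x ∂μpost)
    -- `σ̃² = (σ_y⁻² + ᾱ/(1−ᾱ))⁻¹`
    (σtilde2 : ℝ) (hσtilde2 : σtilde2 = ((σy ^ 2)⁻¹ + α / (1 - α))⁻¹)
    -- `x̃(x) = σ̃²(σ_y⁻² y + (√ᾱ/(1−ᾱ)) x)`
    (xtilde : EuclideanSpace ℝ (Fin n) → EuclideanSpace ℝ (Fin n))
    (hxtilde : ∀ x, xtilde x =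
      σtilde2 • ((σy ^ 2)⁻¹ • y + (Real.sqrt α / (1 - α)) • x))
    -- `q(z) = ∫ N(z; x₀, σ̃²I) dμ₀(x₀)`, everywhere positive and differentiable
    (q : EuclideanSpace ℝ (Fin n) → ℝ)
    (hq : ∀ z, q z = ∫ x₀, gaussDensity n σtilde2 x₀ z ∂μ₀) :
    ∀ x, 0 < pVP x ∧ DifferentiableAt ℝ pVP x ∧
      gradient (fun z => Real.log (pVP z)) x
        = (Real.sqrt α * σtilde2 / (1 - α)) • gradient (fun z => Real.log (q z)) (xtilde x)
          - (α⁻¹ * (σy ^ 2 + (1 - α) / α)⁻¹) • (x - Real.sqrt α • y) :=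
  exact_denoising_posterior_score_VP_general n μ₀ α hα σy hσy y Z hZpos μpost hpost pVP hpVP σtilde2
    hσtilde2 xtilde hxtilde q hq
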